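/- Let u : ℝ² → ℝ be C² on a neighborhood of the closed unit ball, with u = 0 on ∂B and -Δu(x) = λ₁ u(x) + g(u(x)) for all x ∈ B. If u does not change sign on B (that is, u ≥ 0 everywhere on B, or u ≤ 0 everywhere on B), then u is identically zero on B. Equivalently, every nonzero solution of the comparison equation must change sign. -/

import Mathlib

open MeasureTheory Metric Real Filter

noncomputable section

/-- The Euclidean plane. -/
abbrev Plane : Type := EuclideanSpace ℝ (Fin 2)

/-- The Laplacian of `u : Plane → ℝ`, as the sum of second partial derivatives
in the standard coordinate directions. -/
def lap (u : Plane → ℝ) (x : Plane) : ℝ :=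
  ∑ i : Fin 2,
    fderiv ℝ (fun y => fderiv ℝ u y (EuclideanSpace.single i 1)) x (EuclideanSpace.single i 1)

/-- The cutoff sine nonlinearity: `g t = sin t` for `|t| ≤ π` and `g t = 0` otherwise. -/
def gfun (t : ℝ) : ℝ := if |t| ≤ π then Real.sin t else 0

/-!
Green's identity `∫_B (φ₁ Δu - u Δφ₁) = 0` and the two equations give `∫_B φ₁ g(u) = 0`.
If `u ≥ 0`, the integrand is continuous and nonnegative, so `g(u) = 0` on `B`: `u` takes no value
in `(0, π)` there. Since `u` is continuous on the connected closed ball and vanishes on the circle,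
the intermediate value theorem forces `u = 0`. The case `u ≤ 0` reduces to this one as `g` is odd.

Green's identity follows from `∫_B ∂ᵢ F = 0` for `C¹` functions `F` vanishing on the circle, which
is Fubini's theorem: every line parallel to the `i`-th axis meets the disc in an interval at whose
endpoints `F` vanishes.
-/

open Set

theorem integral_fderiv_fst_unitDisc_eq_zero {G : ℝ × ℝ → ℝ} {V : Set (ℝ × ℝ)} (hV : IsOpen V)
    (hKV : {p : ℝ × ℝ | p.1 ^ 2 + p.2 ^ 2 ≤ 1} ⊆ V) (hG : ContDiffOn ℝ 1 G V)
    (hG0 : ∀ p : ℝ × ℝ, p.1 ^ 2 + p.2 ^ 2 = 1 → G p = 0) :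
    ∫ p in {p : ℝ × ℝ | p.1 ^ 2 + p.2 ^ 2 < 1}, fderiv ℝ G p (1, 0) = 0 := by
  set D : Set (ℝ × ℝ) := {p | p.1 ^ 2 + p.2 ^ 2 < 1}
  set K : Set (ℝ × ℝ) := {p | p.1 ^ 2 + p.2 ^ 2 ≤ 1}
  set G' : ℝ × ℝ → ℝ := fun p => fderiv ℝ G p (1, 0)
  have hD : MeasurableSet D := (isOpen_lt (by fun_prop) continuous_const).measurableSet
  have hDK : D ⊆ K := ofPred_subset_ofPred.2 fun _ hp => hp.le
  have hK : IsCompact K := by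
    have hbox : K ⊆ Icc (-1) 1 ×ˢ Icc (-1) 1 := by
      intro p (hp : p.1 ^ 2 + p.2 ^ 2 ≤ 1)
      exact ⟨abs_le.1 ((sq_le_one_iff_abs_le_one _).1 (by nlinarith [sq_nonneg p.2])),
        abs_le.1 ((sq_le_one_iff_abs_le_one _).1 (by nlinarith [sq_nonneg p.1]))⟩
    exact (isCompact_Icc.prod isCompact_Icc).of_isClosed_subset
      (isClosed_le (by fun_prop) continuous_const) hbox
  have hG'cont : ContinuousOn G' V :=
    (hG.continuousOn_fderiv_of_isOpen hV le_rfl).clm_apply continuousOn_const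
  have hint : Integrable (D.indicator G') :=
    (integrable_indicator_iff hD).2 <|
      ((hG'cont.mono hKV).integrableOn_compact hK).mono_set hDK
  have hslice : ∀ y : ℝ, ∫ x, D.indicator G' (x, y) = 0 := by
    intro y
    set a := √(1 - y ^ 2)
    have hind :
        (fun x => D.indicator G' (x, y)) = (Ioo (-a) a).indicator (fun x => G' (x, y)) := by
      ext x
      have hx : (x, y) ∈ D ↔ x ∈ Ioo (-a) a := by
        rw [mem_Ioo, ← Real.sq_lt, lt_sub_iff_add_lt]
        rfl
      simp only [indicator, hx]
    rw [hind, integral_indicator measurableSet_Ioo, integral_Ioc_eq_integral_Ioo.symm]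
    rcases le_or_gt (y ^ 2) 1 with hy | hy
    · have ha : a ^ 2 = 1 - y ^ 2 := Real.sq_sqrt (by linarith)
      have hmem : ∀ x ∈ uIcc (-a) a, (x, y) ∈ V := fun x hx => hKV <| by
        rw [uIcc_of_le (by simp [a])] at hx
        show x ^ 2 + y ^ 2 ≤ 1
        nlinarith [Real.sq_le (by linarith : (0:ℝ) ≤ 1 - y ^ 2) |>.2 hx]
      have hderiv : ∀ x ∈ uIcc (-a) a, HasDerivAt (fun t => G (t, y)) (G' (x, y)) x := by
        intro x hx
        have hGx := ((hG.differentiableOn one_ne_zero).differentiableAt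
          (hV.mem_nhds (hmem x hx))).hasFDerivAt
        simpa [G', Function.comp_def] using
          hGx.comp_hasDerivAt x ((hasDerivAt_id x).prodMk (hasDerivAt_const x y))
      have hcont : ContinuousOn (fun x => G' (x, y)) (uIcc (-a) a) :=
        hG'cont.comp (by fun_prop) hmem
      rw [← intervalIntegral.integral_of_le (by simp [a]),
        intervalIntegral.integral_eq_sub_of_hasDerivAt hderiv hcont.intervalIntegrable,
        hG0 (a, y) (by simp only; linarith), hG0 (-a, y) (by simp only; linarith), sub_zero]
    · simp [a, Real.sqrt_eq_zero'.2 (by linarith : 1 - y ^ 2 ≤ 0)]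
  calc ∫ p in D, G' p = ∫ p, D.indicator G' p := (integral_indicator hD).symm
    _ = ∫ y, ∫ x, D.indicator G' (x, y) := by
      rw [Measure.volume_eq_prod, integral_prod_symm _ hint]
    _ = 0 := by simp [hslice]

theorem integral_fderiv_snd_unitDisc_eq_zero {G : ℝ × ℝ → ℝ} {V : Set (ℝ × ℝ)} (hV : IsOpen V)
    (hKV : {p : ℝ × ℝ | p.1 ^ 2 + p.2 ^ 2 ≤ 1} ⊆ V) (hG : ContDiffOn ℝ 1 G V)
    (hG0 : ∀ p : ℝ × ℝ, p.1 ^ 2 + p.2 ^ 2 = 1 → G p = 0) :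
    ∫ p in {p : ℝ × ℝ | p.1 ^ 2 + p.2 ^ 2 < 1}, fderiv ℝ G p (0, 1) = 0 := by
  set σ : (ℝ × ℝ) ≃L[ℝ] ℝ × ℝ := ContinuousLinearEquiv.prodComm ℝ ℝ ℝ
  have hswap :
      Prod.swap ⁻¹' {p : ℝ × ℝ | p.1 ^ 2 + p.2 ^ 2 < 1} = {p | p.1 ^ 2 + p.2 ^ 2 < 1} := by
    ext p; simp [add_comm]
  have hσ : ∀ p, fderiv ℝ (G ∘ σ) p (1, 0) = fderiv ℝ G p.swap (0, 1) := fun p => by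
    rw [σ.comp_right_fderiv]; rfl
  have hmp := (Measure.measurePreserving_swap (μ := (volume : Measure ℝ)) (ν := volume))
    |>.setIntegral_preimage_emb MeasurableEquiv.prodComm.measurableEmbedding
      (fun p => fderiv ℝ G p (0, 1))
    {p : ℝ × ℝ | p.1 ^ 2 + p.2 ^ 2 < 1}
  rw [← Measure.volume_eq_prod, hswap] at hmp
  rw [← hmp]
  simp_rw [← hσ]
  refine integral_fderiv_fst_unitDisc_eq_zero (hV.preimage σ.continuous) ?_
    (hG.comp σ.contDiff.contDiffOn (mapsTo_preimage _ _)) fun p hp => hG0 _ ?_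
  · intro p hp
    exact hKV (by simpa [σ, add_comm] using hp)
  · simpa [σ, add_comm] using hp

def partialDeriv (i : Fin 2) (f : Plane → ℝ) (x : Plane) : ℝ :=
  fderiv ℝ f x (EuclideanSpace.single i 1)

theorem lap_eq_sum_partialDeriv (u : Plane → ℝ) (x : Plane) :
    lap u x = ∑ i, partialDeriv i (partialDeriv i u) x := rfl

theorem ContDiffOn.partialDeriv {f : Plane → ℝ} {U : Set Plane} {m n : WithTop ℕ∞}
    (hf : ContDiffOn ℝ n f U) (hU : IsOpen U) (hmn : m + 1 ≤ n) (i : Fin 2) :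
    ContDiffOn ℝ m (partialDeriv i f) U :=
  (hf.fderiv_of_isOpen hU hmn).clm_apply contDiffOn_const

theorem partialDeriv_mul_partialDeriv_sub {v w : Plane → ℝ} {x : Plane} {i : Fin 2}
    (hv : DifferentiableAt ℝ v x) (hw : DifferentiableAt ℝ w x)
    (hv' : DifferentiableAt ℝ (partialDeriv i v) x)
    (hw' : DifferentiableAt ℝ (partialDeriv i w) x) :
    partialDeriv i (fun y => v y * partialDeriv i w y - w y * partialDeriv i v y) x =
      v x * partialDeriv i (partialDeriv i w) x - w x * partialDeriv i (partialDeriv i v) x := by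
  rw [partialDeriv,
    ((hv.hasFDerivAt.fun_mul hw'.hasFDerivAt).fun_sub
      (hw.hasFDerivAt.fun_mul hv'.hasFDerivAt)).fderiv]
  simp only [partialDeriv, sub_apply, add_apply, smul_apply, smul_eq_mul]
  ring

def toPlane : (ℝ × ℝ) ≃L[ℝ] Plane :=
  ((EuclideanSpace.equiv (Fin 2) ℝ).trans (ContinuousLinearEquiv.finTwoArrow ℝ ℝ)).symm

theorem measurePreserving_toPlane : MeasurePreserving toPlane :=
  (PiLp.volume_preserving_toLp (Fin 2)).comp (volume_preserving_finTwoArrow ℝ).symm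

theorem norm_toPlane_sq (p : ℝ × ℝ) : ‖toPlane p‖ ^ 2 = p.1 ^ 2 + p.2 ^ 2 := by
  simp [EuclideanSpace.norm_sq_eq, Fin.sum_univ_two, toPlane]

theorem toPlane_one_zero : toPlane (1, 0) = EuclideanSpace.single 0 1 := by
  ext j; fin_cases j <;> simp [toPlane]

theorem toPlane_zero_one : toPlane (0, 1) = EuclideanSpace.single 1 1 := by
  ext j; fin_cases j <;> simp [toPlane]

theorem integral_partialDeriv_ball_eq_zero {f : Plane → ℝ} {U : Set Plane} (hU : IsOpen U)
    (hBU : closedBall 0 1 ⊆ U) (hf : ContDiffOn ℝ 1 f U)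
    (hf0 : ∀ x ∈ sphere (0 : Plane) 1, f x = 0) (i : Fin 2) :
    ∫ x in ball (0 : Plane) 1, partialDeriv i f x = 0 := by
  have hball : toPlane ⁻¹' ball 0 1 = {p : ℝ × ℝ | p.1 ^ 2 + p.2 ^ 2 < 1} := by
    ext p
    simp [← norm_toPlane_sq, sq_lt_one_iff₀ (norm_nonneg _)]
  have hK : {p : ℝ × ℝ | p.1 ^ 2 + p.2 ^ 2 ≤ 1} ⊆ toPlane ⁻¹' U := fun p hp =>
    hBU (by simpa [← norm_toPlane_sq, sq_le_one_iff₀ (norm_nonneg _)] using hp)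
  have hG0 : ∀ p : ℝ × ℝ, p.1 ^ 2 + p.2 ^ 2 = 1 → (f ∘ toPlane) p = 0 := fun p hp =>
    hf0 _ (by simpa [← norm_toPlane_sq, pow_eq_one_iff_of_nonneg (norm_nonneg _)] using hp)
  have hG : ContDiffOn ℝ 1 (f ∘ toPlane) (toPlane ⁻¹' U) :=
    hf.comp toPlane.contDiff.contDiffOn (mapsTo_preimage _ _)
  have hV : IsOpen (toPlane ⁻¹' U) := hU.preimage toPlane.continuous
  have hderiv : ∀ p e, fderiv ℝ f (toPlane p) (toPlane e) = fderiv ℝ (f ∘ toPlane) p e := by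
    intro p e
    rw [toPlane.comp_right_fderiv]
    rfl
  rw [← measurePreserving_toPlane.setIntegral_preimage_emb
    toPlane.toHomeomorph.measurableEmbedding, hball]
  fin_cases i <;> simp only [Fin.zero_eta, Fin.mk_one]
  · simp_rw [partialDeriv, ← toPlane_one_zero, hderiv]
    exact integral_fderiv_fst_unitDisc_eq_zero hV hK hG hG0
  · simp_rw [partialDeriv, ← toPlane_zero_one, hderiv]
    exact integral_fderiv_snd_unitDisc_eq_zero hV hK hG hG0

theorem integral_ball_mul_lap_sub_eq_zero {U : Set Plane} (hU : IsOpen U)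
    (hBU : closedBall (0 : Plane) 1 ⊆ U) {v w : Plane → ℝ} (hv : ContDiffOn ℝ 2 v U)
    (hw : ContDiffOn ℝ 2 w U) (hv0 : ∀ x ∈ sphere (0 : Plane) 1, v x = 0)
    (hw0 : ∀ x ∈ sphere (0 : Plane) 1, w x = 0) :
    ∫ x in ball (0 : Plane) 1, (v x * lap w x - w x * lap v x) = 0 := by
  set F : Fin 2 → Plane → ℝ := fun i y => v y * partialDeriv i w y - w y * partialDeriv i v y
  have hdiff : ∀ {f : Plane → ℝ}, ContDiffOn ℝ 1 f U → ∀ x ∈ U, DifferentiableAt ℝ f x :=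
    fun hf x hx => (hf.differentiableOn one_ne_zero).differentiableAt (hU.mem_nhds hx)
  have hv' : ∀ i, ContDiffOn ℝ 1 (partialDeriv i v) U := hv.partialDeriv hU (by norm_num)
  have hw' : ∀ i, ContDiffOn ℝ 1 (partialDeriv i w) U := hw.partialDeriv hU (by norm_num)
  have hF : ∀ i, ContDiffOn ℝ 1 (F i) U := fun i =>
    ((hv.of_le one_le_two).mul (hw' i)).sub ((hw.of_le one_le_two).mul (hv' i))
  have hF0 : ∀ i, ∀ x ∈ sphere (0 : Plane) 1, F i x = 0 := fun i x hx => by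
    simp [F, hv0 x hx, hw0 x hx]
  have hFint : ∀ i, IntegrableOn (partialDeriv i (F i)) (ball 0 1) := fun i =>
    ((((hF i).partialDeriv hU (m := 0) (by norm_num) i).continuousOn.mono hBU).integrableOn_compact
      (isCompact_closedBall 0 1)).mono_set ball_subset_closedBall
  have hpt : ∀ x ∈ ball (0 : Plane) 1,
      v x * lap w x - w x * lap v x = ∑ i, partialDeriv i (F i) x := by
    intro x hx
    have hxU : x ∈ U := hBU (ball_subset_closedBall hx)
    have hF' : ∀ i, partialDeriv i (F i) x =
        v x * partialDeriv i (partialDeriv i w) x - w x * partialDeriv i (partialDeriv i v) x :=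
      fun i => partialDeriv_mul_partialDeriv_sub (hdiff (hv.of_le one_le_two) x hxU)
        (hdiff (hw.of_le one_le_two) x hxU) (hdiff (hv' i) x hxU) (hdiff (hw' i) x hxU)
    simp only [hF', lap_eq_sum_partialDeriv, Fin.sum_univ_two]
    ring
  calc ∫ x in ball (0 : Plane) 1, (v x * lap w x - w x * lap v x)
      = ∫ x in ball (0 : Plane) 1, ∑ i, partialDeriv i (F i) x :=
        setIntegral_congr_fun measurableSet_ball hpt
    _ = ∑ i, ∫ x in ball (0 : Plane) 1, partialDeriv i (F i) x :=
        integral_finsetSum _ fun i _ => hFint i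
    _ = 0 := by
      simp [integral_partialDeriv_ball_eq_zero hU hBU (hF _) (hF0 _)]

theorem partialDeriv_neg (i : Fin 2) (f : Plane → ℝ) :
    partialDeriv i (fun y => -f y) = fun x => -partialDeriv i f x := by
  ext x
  simp [partialDeriv]

theorem lap_neg (u : Plane → ℝ) (x : Plane) : lap (fun y => -u y) x = -lap u x := by
  simp [lap_eq_sum_partialDeriv, partialDeriv_neg]

theorem continuous_gfun : Continuous gfun :=
  Continuous.if_le continuous_sin continuous_const continuous_abs continuous_const fun t ht => by
    rcases (abs_eq pi_pos.le).1 ht with rfl | rfl <;> simp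

theorem gfun_neg (t : ℝ) : gfun (-t) = -gfun t := by
  simp only [gfun, abs_neg, sin_neg]
  split_ifs <;> simp

theorem gfun_nonneg {t : ℝ} (ht : 0 ≤ t) : 0 ≤ gfun t := by
  unfold gfun
  split_ifs with h
  · exact sin_nonneg_of_nonneg_of_le_pi ht (abs_le.1 h).2
  · exact le_rfl

theorem gfun_pos {t : ℝ} (h0 : 0 < t) (hπ : t < π) : 0 < gfun t := by
  rw [gfun, if_pos (abs_le.2 ⟨by linarith, hπ.le⟩)]
  exact sin_pos_of_pos_of_lt_pi h0 hπ

theorem eqOn_zero_of_setIntegral_eq_zero {X : Type*} [TopologicalSpace X] [MeasurableSpace X]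
    [OpensMeasurableSpace X] {μ : Measure X} [μ.IsOpenPosMeasure] {f : X → ℝ} {s : Set X}
    (hs : IsOpen s) (hf : ContinuousOn f s) (hfi : IntegrableOn f s μ) (hf0 : ∀ x ∈ s, 0 ≤ f x)
    (h : ∫ x in s, f x ∂μ = 0) : EqOn f 0 s :=
  Measure.eqOn_open_of_ae_eq ((setIntegral_eq_zero_iff_of_nonneg_ae
    (ae_restrict_of_forall_mem hs.measurableSet hf0) hfi).1 h) hs hf continuousOn_const

theorem eq_zero_of_gfun_eq_zero {u : Plane → ℝ} (hu : ContinuousOn u (closedBall 0 1))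
    (hu0 : ∀ x ∈ sphere (0 : Plane) 1, u x = 0) (hnonneg : ∀ x ∈ ball (0 : Plane) 1, 0 ≤ u x)
    (hg : ∀ x ∈ ball (0 : Plane) 1, gfun (u x) = 0) : ∀ x ∈ ball (0 : Plane) 1, u x = 0 := by
  intro x hx
  by_contra hux
  have hpos : 0 < u x := lt_of_le_of_ne (hnonneg x hx) (Ne.symm hux)
  have he : EuclideanSpace.single 0 1 ∈ sphere (0 : Plane) 1 := by simp
  obtain ⟨y, hy, huy⟩ : min (u x) 1 ∈ u '' closedBall 0 1 :=
    (convex_closedBall 0 1).isPreconnected.intermediate_value (sphere_subset_closedBall he)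
      (ball_subset_closedBall hx) hu ⟨by rw [hu0 _ he]; positivity, min_le_left _ _⟩
  have hy' : y ∈ ball (0 : Plane) 1 := by
    refine mem_ball.2 (lt_of_le_of_ne (mem_closedBall.1 hy) fun hy1 => ?_)
    have := hu0 y (mem_sphere.2 hy1)
    rw [huy] at this
    exact (lt_min hpos one_pos).ne' this
  have := hg y hy'
  rw [huy] at this
  exact (gfun_pos (lt_min hpos one_pos) (by linarith [min_le_right (u x) 1, pi_gt_three])).ne' this

theorem eq_zero_of_nonneg_of_neg_lap_eq {lam : ℝ} {φ u : Plane → ℝ} {U : Set Plane}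
    (hU : IsOpen U) (hBU : closedBall 0 1 ⊆ U)
    (hφ : ContDiffOn ℝ 2 φ U) (hφpos : ∀ x ∈ ball (0 : Plane) 1, 0 < φ x)
    (hφ0 : ∀ x ∈ sphere (0 : Plane) 1, φ x = 0)
    (hφeq : ∀ x ∈ ball (0 : Plane) 1, -lap φ x = lam * φ x)
    (hu : ContDiffOn ℝ 2 u U) (hu0 : ∀ x ∈ sphere (0 : Plane) 1, u x = 0)
    (hueq : ∀ x ∈ ball (0 : Plane) 1, -lap u x = lam * u x + gfun (u x))
    (hnonneg : ∀ x ∈ ball (0 : Plane) 1, 0 ≤ u x) :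
    ∀ x ∈ ball (0 : Plane) 1, u x = 0 := by
  have hint : ∫ x in ball (0 : Plane) 1, φ x * gfun (u x) = 0 := by
    have hgreen := integral_ball_mul_lap_sub_eq_zero hU hBU hφ hu hφ0 hu0
    rwa [setIntegral_congr_fun measurableSet_ball (g := fun x => -(φ x * gfun (u x)))
      fun x hx => by linear_combination (-φ x) * hueq x hx + u x * hφeq x hx,
      integral_neg, neg_eq_zero] at hgreen
  have hcont : ContinuousOn (fun x => φ x * gfun (u x)) (closedBall 0 1) :=
    (hφ.continuousOn.mono hBU).mul (continuous_gfun.comp_continuousOn (hu.continuousOn.mono hBU))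
  have hzero := eqOn_zero_of_setIntegral_eq_zero isOpen_ball (hcont.mono ball_subset_closedBall)
    ((hcont.integrableOn_compact (isCompact_closedBall 0 1)).mono_set ball_subset_closedBall)
    (fun x hx => mul_nonneg (hφpos x hx).le (gfun_nonneg (hnonneg x hx))) hint
  exact eq_zero_of_gfun_eq_zero (hu.continuousOn.mono hBU) hu0 hnonneg fun x hx =>
    (mul_eq_zero.1 (hzero hx)).resolve_left (hφpos x hx).ne'

theorem comparison_solution_changes_sign_general
    (lam1 : ℝ) (φ₁ : Plane → ℝ)
    (hφC2 : ∃ U : Set Plane, IsOpen U ∧ closedBall 0 1 ⊆ U ∧ ContDiffOn ℝ 2 φ₁ U)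
    (hφpos : ∀ x ∈ ball (0 : Plane) 1, 0 < φ₁ x)
    (hφbd : ∀ x ∈ sphere (0 : Plane) 1, φ₁ x = 0)
    (hφeq : ∀ x ∈ ball (0 : Plane) 1, -lap φ₁ x = lam1 * φ₁ x)
    (u : Plane → ℝ)
    (huC2 : ∃ U : Set Plane, IsOpen U ∧ closedBall 0 1 ⊆ U ∧ ContDiffOn ℝ 2 u U)
    (hubd : ∀ x ∈ sphere (0 : Plane) 1, u x = 0)
    (hueq : ∀ x ∈ ball (0 : Plane) 1, -lap u x = lam1 * u x + gfun (u x))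
    (hsign : (∀ x ∈ ball (0 : Plane) 1, 0 ≤ u x) ∨ (∀ x ∈ ball (0 : Plane) 1, u x ≤ 0)) :
    ∀ x ∈ ball (0 : Plane) 1, u x = 0 := by
  obtain ⟨U₁, hU₁, hBU₁, hφ⟩ := hφC2
  obtain ⟨U₂, hU₂, hBU₂, hu⟩ := huC2
  have key := fun v => eq_zero_of_nonneg_of_neg_lap_eq (u := v) (hU₁.inter hU₂)
    (subset_inter hBU₁ hBU₂) (hφ.mono inter_subset_left) hφpos hφbd hφeq
  rcases hsign with hnonneg | hnonpos
  · exact key u (hu.mono inter_subset_right) hubd hueq hnonneg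
  · intro x hx
    simpa using key (fun y => -u y) (hu.mono inter_subset_right).neg
      (fun y hy => by simp [hubd y hy])
      (fun y hy => by rw [lap_neg, gfun_neg]; linarith [hueq y hy])
      (fun y hy => neg_nonneg.2 (hnonpos y hy)) x hx

theorem comparison_solution_changes_sign
    (lam1 : ℝ) (φ₁ : Plane → ℝ)
    (hlam1 : 0 < lam1)
    (hφC2 : ∃ U : Set Plane, IsOpen U ∧ closedBall 0 1 ⊆ U ∧ ContDiffOn ℝ 2 φ₁ U)
    (hφpos : ∀ x ∈ ball (0 : Plane) 1, 0 < φ₁ x)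
    (hφbd : ∀ x ∈ sphere (0 : Plane) 1, φ₁ x = 0)
    (hφeq : ∀ x ∈ ball (0 : Plane) 1, -lap φ₁ x = lam1 * φ₁ x)
    (hφrad : ∀ x y : Plane, ‖x‖ = ‖y‖ → φ₁ x = φ₁ y)
    (hφnorm : (∫ x in ball (0 : Plane) 1, (φ₁ x) ^ 2) = 1)
    (hφfirst : ∀ v : Plane → ℝ, ContDiff ℝ 1 v →
      (∀ x ∈ sphere (0 : Plane) 1, v x = 0) →
      lam1 * ∫ x in ball (0 : Plane) 1, (v x) ^ 2 ≤
        ∫ x in ball (0 : Plane) 1, ‖gradient v x‖ ^ 2)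
    (u : Plane → ℝ)
    (huC2 : ∃ U : Set Plane, IsOpen U ∧ closedBall 0 1 ⊆ U ∧ ContDiffOn ℝ 2 u U)
    (hubd : ∀ x ∈ sphere (0 : Plane) 1, u x = 0)
    (hueq : ∀ x ∈ ball (0 : Plane) 1, -lap u x = lam1 * u x + gfun (u x))
    (hsign : (∀ x ∈ ball (0 : Plane) 1, 0 ≤ u x) ∨ (∀ x ∈ ball (0 : Plane) 1, u x ≤ 0)) :
    ∀ x ∈ ball (0 : Plane) 1, u x = 0 :=
  comparison_solution_changes_sign_general lam1 φ₁ hφC2 hφpos hφbd hφeq u huC2 hubd hueq hsign
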